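/- For every vertex v of SP_9, the set N^-(v) of negative neighbors of v contains neither a triangle all of whose edges are positive nor a triangle all of whose edges are negative. -/

import Mathlib

open Polynomial

/-- GF(9) constructed as GF(3)[x]/(x²+1). -/
abbrev F9 : Type := AdjoinRoot (X ^ 2 + 1 : (ZMod 3)[X])

/-- The class of the polynomial x. -/
noncomputable def ξ : F9 := AdjoinRoot.root _

/-- `a` is a nonzero square in GF(9). -/
def Sq (a : F9) : Prop := a ≠ 0 ∧ ∃ b : F9, b ^ 2 = a

/-- A set of vertices of SP₉ is (signed) triangle-free. -/
def TriFree (S : Set F9) : Prop :=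
  (¬ ∃ a b c, a ∈ S ∧ b ∈ S ∧ c ∈ S ∧ a ≠ b ∧ a ≠ c ∧ b ≠ c ∧
      Sq (a - b) ∧ Sq (b - c) ∧ Sq (a - c)) ∧
  (¬ ∃ a b c, a ∈ S ∧ b ∈ S ∧ c ∈ S ∧ a ≠ b ∧ a ≠ c ∧ b ≠ c ∧
      ¬ Sq (a - b) ∧ ¬ Sq (b - c) ∧ ¬ Sq (a - c))

/-!
By Euler's criterion a nonzero `x ∈ 𝔽₉` is a square iff `x ^ 4 = 1`, so every nonsquare has
fourth power `-1`, and in characteristic 3 this gives `(u - w) ^ 4 = 1 - u w (u ^ 2 + w ^ 2)` for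
nonsquares `u, w`. Hence `u - w` is a nonzero square iff `u ^ 2 + w ^ 2 = 0`, and otherwise
`u ^ 2 = w ^ 2`, i.e. `u = ± w`. After translating by `v`, a positive triangle in `N⁻(v)` gives
three nonsquares with pairwise opposite squares, forcing `2 u ^ 2 = 0`; a negative one gives
three distinct nonsquares with `u = -w` and `w = -z`, forcing `u = z`.
-/

namespace FiniteField

variable {F : Type*} [Field F] [Fintype F]

lemma three_eq_zero_of_card_eq_nine (hF : Fintype.card F = 9) : (3 : F) = 0 := by
  have h9 : ((9 : ℕ) : F) = 0 := hF ▸ FiniteField.cast_card_eq_zero F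
  exact pow_eq_zero_iff two_ne_zero |>.mp (by norm_num at h9 ⊢; exact h9)

lemma ringChar_ne_two_of_card_eq_nine (hF : Fintype.card F = 9) : ringChar F ≠ 2 := by
  rw [Ne, FiniteField.even_card_iff_char_two, hF]
  decide

lemma isSquare_iff_pow_four_eq_one_of_card_eq_nine (hF : Fintype.card F = 9) {a : F}
    (ha : a ≠ 0) : IsSquare a ↔ a ^ 4 = 1 := by
  rw [FiniteField.isSquare_iff (ringChar_ne_two_of_card_eq_nine hF) ha, hF]

lemma pow_four_eq_neg_one_of_not_isSquare (hF : Fintype.card F = 9) {a : F}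
    (ha : ¬IsSquare a) : a ^ 4 = -1 := by
  have ha0 : a ≠ 0 := by rintro rfl; exact ha IsSquare.zero
  have h8 : a ^ 8 = 1 := by simpa [hF] using FiniteField.pow_card_sub_one_eq_one a ha0
  have h4 : a ^ 4 - 1 ≠ 0 :=
    sub_ne_zero.mpr ((isSquare_iff_pow_four_eq_one_of_card_eq_nine hF ha0).not.mp ha)
  have : (a ^ 4 - 1) * (a ^ 4 + 1) = 0 := by linear_combination h8
  exact eq_neg_of_add_eq_zero_left ((mul_eq_zero.mp this).resolve_left h4)

lemma sub_ne_zero_and_isSquare_sub_iff (hF : Fintype.card F = 9) {u w : F}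
    (hu : ¬IsSquare u) (hw : ¬IsSquare w) :
    u - w ≠ 0 ∧ IsSquare (u - w) ↔ u ^ 2 + w ^ 2 = 0 := by
  have hu0 : u ≠ 0 := by rintro rfl; exact hu IsSquare.zero
  have hw0 : w ≠ 0 := by rintro rfl; exact hw IsSquare.zero
  have key : (u - w) ^ 4 = 1 - u * w * (u ^ 2 + w ^ 2) := by
    linear_combination pow_four_eq_neg_one_of_not_isSquare hF hu +
      pow_four_eq_neg_one_of_not_isSquare hF hw +
      (-u ^ 3 * w + 2 * u ^ 2 * w ^ 2 - u * w ^ 3 - 1) * three_eq_zero_of_card_eq_nine hF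
  constructor
  · rintro ⟨hne, hsq⟩
    rw [isSquare_iff_pow_four_eq_one_of_card_eq_nine hF hne, key] at hsq
    have : u * w * (u ^ 2 + w ^ 2) = 0 := by linear_combination -hsq
    simpa [hu0, hw0] using this
  · intro h
    have hne : u - w ≠ 0 := by
      intro huw
      have : 2 * u ^ 2 = 0 := by rw [sub_eq_zero.mp huw] at h ⊢; linear_combination h
      simp [Ring.two_ne_zero (ringChar_ne_two_of_card_eq_nine hF), hu0] at this
    refine ⟨hne, (isSquare_iff_pow_four_eq_one_of_card_eq_nine hF hne).mpr ?_⟩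
    rw [key, h, mul_zero, sub_zero]

lemma eq_neg_of_sq_add_sq_ne_zero (hF : Fintype.card F = 9) {u w : F}
    (hu : ¬IsSquare u) (hw : ¬IsSquare w) (hne : u ≠ w) (h : u ^ 2 + w ^ 2 ≠ 0) : u = -w := by
  have : (u ^ 2 - w ^ 2) * (u ^ 2 + w ^ 2) = 0 := by
    linear_combination pow_four_eq_neg_one_of_not_isSquare hF hu -
      pow_four_eq_neg_one_of_not_isSquare hF hw
  have hsq : u ^ 2 = w ^ 2 := sub_eq_zero.mp ((mul_eq_zero.mp this).resolve_right h)
  exact (sq_eq_sq_iff_eq_or_eq_neg.mp hsq).resolve_left hne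

end FiniteField

open FiniteField

lemma monic_X_sq_add_one : (X ^ 2 + 1 : (ZMod 3)[X]).Monic := by monicity!

lemma natDegree_X_sq_add_one : (X ^ 2 + 1 : (ZMod 3)[X]).natDegree = 2 := by compute_degree!

lemma irreducible_X_sq_add_one : Irreducible (X ^ 2 + 1 : (ZMod 3)[X]) := by
  refine irreducible_of_degree_le_three_of_not_isRoot (by simp [natDegree_X_sq_add_one]) ?_
  simp only [IsRoot, eval_add, eval_pow, eval_X, eval_one]
  decide

noncomputable instance : Fintype F9 :=
  Module.fintypeOfFintype (AdjoinRoot.powerBasis' monic_X_sq_add_one).basis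

lemma card_F9 : Fintype.card F9 = 9 := by
  rw [Module.card_eq_pow_finrank (K := ZMod 3), ZMod.card,
    (AdjoinRoot.powerBasis' monic_X_sq_add_one).finrank, AdjoinRoot.powerBasis'_dim,
    natDegree_X_sq_add_one]
  rfl

lemma sq_iff_ne_zero_and_isSquare (a : F9) : Sq a ↔ a ≠ 0 ∧ IsSquare a := by
  simp only [Sq, IsSquare, sq, eq_comm]

/-- The negative neighborhood of any vertex of SP₉ is triangle-free. -/
theorem neg_neighborhood_triangle_free (v : F9) :
    TriFree {u : F9 | u ≠ v ∧ ¬ Sq (u - v)} := by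
  -- Only local: a global `Field F9` instance would elaborate the `-` of the statement through
  -- a different (defeq) instance path.
  have := Fact.mk irreducible_X_sq_add_one
  have nonsq : ∀ {u}, u ≠ v ∧ ¬ Sq (u - v) → ¬IsSquare (u - v) := fun ⟨hne, hu⟩ hsq =>
    hu ((sq_iff_ne_zero_and_isSquare _).mpr ⟨sub_ne_zero.mpr hne, hsq⟩)
  have sq_sub : ∀ {a b}, a ≠ v ∧ ¬ Sq (a - v) → b ≠ v ∧ ¬ Sq (b - v) →
      (Sq (a - b) ↔ (a - v) ^ 2 + (b - v) ^ 2 = 0) := by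
    intro a b ha hb
    rw [sq_iff_ne_zero_and_isSquare, ← sub_sub_sub_cancel_right a b v]
    exact sub_ne_zero_and_isSquare_sub_iff card_F9 (nonsq ha) (nonsq hb)
  constructor
  · rintro ⟨a, b, c, ha, hb, hc, -, -, -, hab, hbc, hac⟩
    simp only [sq_sub ha hb, sq_sub hb hc, sq_sub ha hc] at hab hbc hac
    have h2 : 2 * (a - v) ^ 2 = 0 := by linear_combination hab - hbc + hac
    have : (a - v) ^ 2 = 0 :=
      (mul_eq_zero.mp h2).resolve_left (Ring.two_ne_zero (ringChar_ne_two_of_card_eq_nine card_F9))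
    exact ha.1 (sub_eq_zero.mp (pow_eq_zero_iff two_ne_zero |>.mp this))
  · rintro ⟨a, b, c, ha, hb, hc, hab, hac, hbc, nab, nbc, -⟩
    simp only [sq_sub ha hb, sq_sub hb hc] at nab nbc
    have opp_ab := eq_neg_of_sq_add_sq_ne_zero card_F9 (nonsq ha) (nonsq hb)
      (sub_left_injective.ne hab) nab
    have opp_bc := eq_neg_of_sq_add_sq_ne_zero card_F9 (nonsq hb) (nonsq hc)
      (sub_left_injective.ne hbc) nbc
    exact hac (sub_left_inj.mp (by rw [opp_ab, opp_bc, neg_neg]))
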